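/- arXiv:1310.0932 — 6 statements merged into one kernel-verified Lean document; each statement's English description precedes it below -/
import Mathlib

section
/- Let n, q ≥ 1, let F11 ∈ ℝ^{n×n}, F12 ∈ ℝ^{n×q}, F21 ∈ ℝ^{q×n}, F22 ∈ ℝ^{q×q}. Let P1 ∈ ℝ^{n×n}, P2 ∈ ℝ^{q×q} be symmetric positive definite and let Q ∈ ℝ^{n×n} be symmetric positive definite with F11ᵀP1 + P1F11 + Q negative semidefinite. Set λ0 := λmin(Q). Then there exist λ > 0, ρ > 0 and λ1 > 0 such that for all x ∈ ℝⁿ, e ∈ ℝ^q and all τ ∈ [0, 2ρ]: xᵀ(F11ᵀP1 + P1F11)x + 2xᵀP1F12e + 2·exp((2ρ − τ)λ)·eᵀP2(F21x + F22e) − λ·exp((2ρ − τ)λ)·eᵀP2e ≤ −(λ0/2)|x|² − λ1·exp((2ρ − τ)λ)·|e|². -/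
open Matrix

/-! Each cross term is split by Young's inequality `2 xᵀBy ≤ ε|x|² + ε⁻¹‖B‖_F²|y|²`, with `ε` a
fraction of `λ0`, so that the Lyapunov bound `xᵀ(F11ᵀP1 + P1F11)x ≤ -λ0|x|²` absorbs all the
`x`-parts. Taking `ρ = log 2 / (2λ)` keeps the weight `exp((2ρ - τ)λ)` in `[1, 2]`, and `λ` is
chosen so large that `λ · λmin(P2)` outweighs every constant collected in front of `|e|²`;
then `λ1 = 1` works. -/

section QuadraticBounds

variable {ι κ : Type*} [Fintype ι] [Fintype κ]

theorem two_mul_dotProduct_le (x y : ι → ℝ) {ε : ℝ} (hε : 0 < ε) :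
    2 * (x ⬝ᵥ y) ≤ ε * (x ⬝ᵥ x) + ε⁻¹ * (y ⬝ᵥ y) := by
  have h := dotProduct_self_star_nonneg (ε • x - y)
  simp only [star_trivial, sub_dotProduct, dotProduct_sub, smul_dotProduct, dotProduct_smul,
    smul_eq_mul, dotProduct_comm y x] at h
  refine le_of_mul_le_mul_left ?_ hε
  rw [mul_add, ← mul_assoc ε ε⁻¹, mul_inv_cancel₀ hε.ne', one_mul]
  linarith

theorem mulVec_dotProduct_mulVec_le (B : Matrix κ ι ℝ) (y : ι → ℝ) :
    B *ᵥ y ⬝ᵥ B *ᵥ y ≤ (∑ i, ∑ j, B i j ^ 2) * (y ⬝ᵥ y) := by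
  simp only [dotProduct, mulVec, ← sq]
  rw [Finset.sum_mul]
  gcongr with i
  exact Finset.sum_mul_sq_le_sq_mul_sq (R := ℝ) _ _ _

theorem exists_two_mul_dotProduct_mulVec_le (B : Matrix κ ι ℝ) {ε : ℝ} (hε : 0 < ε) :
    ∃ k, 0 ≤ k ∧ ∀ x y, 2 * (x ⬝ᵥ B *ᵥ y) ≤ ε * (x ⬝ᵥ x) + k * (y ⬝ᵥ y) := by
  refine ⟨ε⁻¹ * (∑ i, ∑ j, B i j ^ 2), by positivity, fun x y => ?_⟩
  calc 2 * (x ⬝ᵥ B *ᵥ y) ≤ ε * (x ⬝ᵥ x) + ε⁻¹ * (B *ᵥ y ⬝ᵥ B *ᵥ y) :=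
        two_mul_dotProduct_le x _ hε
    _ ≤ ε * (x ⬝ᵥ x) + ε⁻¹ * ((∑ i, ∑ j, B i j ^ 2) * (y ⬝ᵥ y)) := by
        gcongr
        exact mulVec_dotProduct_mulVec_le B y
    _ = _ := by ring

variable [DecidableEq ι]

open scoped MatrixOrder in
theorem Matrix.IsHermitian.mul_dotProduct_le_dotProduct_mulVec {M : Matrix ι ι ℝ}
    (hM : M.IsHermitian) {c : ℝ} (hc : ∀ i, c ≤ hM.eigenvalues i) (x : ι → ℝ) :
    c * (x ⬝ᵥ x) ≤ x ⬝ᵥ M *ᵥ x := by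
  have hle : algebraMap ℝ _ c ≤ M := by
    rw [algebraMap_le_iff_le_spectrum (ha := hM), hM.spectrum_real_eq_range_eigenvalues]
    rintro _ ⟨i, rfl⟩
    exact hc i
  simpa [Algebra.algebraMap_eq_smul_one, sub_mulVec, dotProduct_sub, smul_mulVec,
    dotProduct_smul] using (le_iff.mp hle).dotProduct_mulVec_nonneg x

theorem Matrix.IsHermitian.iInf_eigenvalues_le {M : Matrix ι ι ℝ} (hM : M.IsHermitian) (i : ι) :
    ⨅ j, hM.eigenvalues j ≤ hM.eigenvalues i :=
  ciInf_le (Set.finite_range _).bddBelow i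

theorem Matrix.PosDef.iInf_eigenvalues_pos [Nonempty ι] {M : Matrix ι ι ℝ} (hM : M.PosDef) :
    0 < ⨅ i, hM.1.eigenvalues i := by
  obtain ⟨i, hi⟩ := Finite.exists_min hM.1.eigenvalues
  exact (hM.eigenvalues_pos i).trans_le (le_ciInf hi)

theorem Matrix.PosDef.exists_pos_mul_dotProduct_le {M : Matrix ι ι ℝ} (hM : M.PosDef) :
    ∃ c, 0 < c ∧ ∀ x, c * (x ⬝ᵥ x) ≤ x ⬝ᵥ M *ᵥ x := by
  cases isEmpty_or_nonempty ι
  · exact ⟨1, one_pos, fun x => by simp [dotProduct]⟩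
  · exact ⟨_, hM.iInf_eigenvalues_pos,
      hM.1.mul_dotProduct_le_dotProduct_mulVec hM.1.iInf_eigenvalues_le⟩

theorem Matrix.dotProduct_mulVec_le_of_posSemidef_neg_add {A Q : Matrix ι ι ℝ}
    (hAQ : (-(A + Q)).PosSemidef) (hQ : Q.IsHermitian) {c : ℝ} (hc : ∀ i, c ≤ hQ.eigenvalues i)
    (x : ι → ℝ) : x ⬝ᵥ A *ᵥ x ≤ -(c * (x ⬝ᵥ x)) := by
  have hsum := hAQ.dotProduct_mulVec_nonneg x
  simp only [star_trivial, neg_mulVec, add_mulVec, dotProduct_neg, dotProduct_add] at hsum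
  linarith [hQ.mul_dotProduct_le_dotProduct_mulVec hc x]

end QuadraticBounds

theorem Real.exp_sub_mul_mem_Icc_one_two {lam τ : ℝ} (hlam : 0 < lam)
    (hτ : τ ∈ Set.Icc 0 (2 * (Real.log 2 / (2 * lam)))) :
    Real.exp ((2 * (Real.log 2 / (2 * lam)) - τ) * lam) ∈ Set.Icc 1 2 := by
  have hT : 2 * (Real.log 2 / (2 * lam)) * lam = Real.log 2 := by field_simp
  refine ⟨Real.one_le_exp (mul_nonneg (by linarith [hτ.2]) hlam.le), ?_⟩
  calc Real.exp ((2 * (Real.log 2 / (2 * lam)) - τ) * lam)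
      ≤ Real.exp (2 * (Real.log 2 / (2 * lam)) * lam) :=
        Real.exp_le_exp.mpr (mul_le_mul_of_nonneg_right (by linarith [hτ.1]) hlam.le)
    _ = 2 := by rw [hT, Real.exp_log two_pos]

theorem stmt_4_general (n q : ℕ) (hn : 1 ≤ n)
    (F11 : Matrix (Fin n) (Fin n) ℝ) (F12 : Matrix (Fin n) (Fin q) ℝ)
    (F21 : Matrix (Fin q) (Fin n) ℝ) (F22 : Matrix (Fin q) (Fin q) ℝ)
    (P1 : Matrix (Fin n) (Fin n) ℝ) (P2 : Matrix (Fin q) (Fin q) ℝ)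
    (hP2 : P2.PosDef)
    (Q : Matrix (Fin n) (Fin n) ℝ) (hQ : Q.PosDef)
    (hLyap : (-(F11ᵀ * P1 + P1 * F11 + Q)).PosSemidef) :
    ∃ lam ρ lam1 : ℝ, 0 < lam ∧ 0 < ρ ∧ 0 < lam1 ∧
      ∀ (x : Fin n → ℝ) (e : Fin q → ℝ) (τ : ℝ), τ ∈ Set.Icc 0 (2 * ρ) →
        x ⬝ᵥ (F11ᵀ * P1 + P1 * F11).mulVec x
          + 2 * (x ⬝ᵥ (P1 * F12).mulVec e)
          + 2 * Real.exp ((2 * ρ - τ) * lam) * (e ⬝ᵥ P2.mulVec (F21.mulVec x + F22.mulVec e))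
          - lam * Real.exp ((2 * ρ - τ) * lam) * (e ⬝ᵥ P2.mulVec e)
        ≤ -((⨅ i, hQ.1.eigenvalues i) / 2) * (x ⬝ᵥ x)
          - lam1 * Real.exp ((2 * ρ - τ) * lam) * (e ⬝ᵥ e) := by
  have : Nonempty (Fin n) := ⟨⟨0, hn⟩⟩
  set lam0 := ⨅ i, hQ.1.eigenvalues i
  have hlam0 : 0 < lam0 := hQ.iInf_eigenvalues_pos
  have hF11 := dotProduct_mulVec_le_of_posSemidef_neg_add hLyap hQ.1 hQ.1.iInf_eigenvalues_le
  obtain ⟨k12, hk12, hF12⟩ := exists_two_mul_dotProduct_mulVec_le (P1 * F12) (ε := lam0 / 4)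
    (by positivity)
  obtain ⟨k21, hk21, hF21⟩ := exists_two_mul_dotProduct_mulVec_le (P2 * F21)ᵀ (ε := lam0 / 8)
    (by positivity)
  obtain ⟨k22, hk22, hF22⟩ := exists_two_mul_dotProduct_mulVec_le (P2 * F22) one_pos
  obtain ⟨p, hp, hP2e⟩ := hP2.exists_pos_mul_dotProduct_le
  set lam := (k12 + k21 + k22 + 2) / p
  have hlam : 0 < lam := by positivity
  refine ⟨lam, Real.log 2 / (2 * lam), 1, hlam,
    div_pos (Real.log_pos one_lt_two) (by positivity), one_pos, fun x e τ hτ => ?_⟩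
  obtain ⟨hE1, hE2⟩ := Real.exp_sub_mul_mem_Icc_one_two hlam hτ
  set E := Real.exp ((2 * (Real.log 2 / (2 * lam)) - τ) * lam)
  have hsplit : e ⬝ᵥ P2 *ᵥ (F21 *ᵥ x + F22 *ᵥ e)
      = x ⬝ᵥ (P2 * F21)ᵀ *ᵥ e + e ⬝ᵥ (P2 * F22) *ᵥ e := by
    rw [mulVec_add, dotProduct_add, mulVec_mulVec, mulVec_mulVec, mulVec_transpose,
      dotProduct_comm x, ← dotProduct_mulVec]
  have hlamp : lam * p = k12 + k21 + k22 + 2 := div_mul_cancel₀ _ hp.ne'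
  have hX := dotProduct_self_star_nonneg x
  have hY := dotProduct_self_star_nonneg e
  simp only [star_trivial] at hX hY
  rw [hsplit]
  -- `E ≤ 2` absorbs `E · λ0/8 |x|²` into `λ0/4 |x|²`; `E ≥ 1` charges `k12 |e|²` to `E |e|²`.
  linarith [hF11 x, hF12 x e, mul_le_mul_of_nonneg_left (hF21 x e) (by linarith : 0 ≤ E),
    mul_le_mul_of_nonneg_left (hF22 e e) (by linarith : 0 ≤ E),
    mul_le_mul_of_nonneg_left (hP2e e) (by positivity : 0 ≤ lam * E),
    mul_nonneg (sub_nonneg.2 hE2) (mul_nonneg hlam0.le hX),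
    mul_nonneg hk12 (mul_nonneg (sub_nonneg.2 hE1) hY), congrArg (· * (E * (e ⬝ᵥ e))) hlamp]

/-- Flow-decrease estimate (13)-(14) in the proof of Theorem 1 (dwell-time
phase of the timer): there exist `λ, ρ, λ1 > 0` such that for all `x`, `e` and
all `τ ∈ [0, 2ρ]`,
`xᵀ(F11ᵀP1 + P1F11)x + 2xᵀP1F12e + 2 exp((2ρ-τ)λ) eᵀP2(F21x + F22e)
  - λ exp((2ρ-τ)λ) eᵀP2e ≤ -(λ0/2)|x|² - λ1 exp((2ρ-τ)λ)|e|²`,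
where `λ0 = λmin(Q)`. -/
theorem stmt_4 (n q : ℕ) (hn : 1 ≤ n) (hq : 1 ≤ q)
    (F11 : Matrix (Fin n) (Fin n) ℝ) (F12 : Matrix (Fin n) (Fin q) ℝ)
    (F21 : Matrix (Fin q) (Fin n) ℝ) (F22 : Matrix (Fin q) (Fin q) ℝ)
    (P1 : Matrix (Fin n) (Fin n) ℝ) (P2 : Matrix (Fin q) (Fin q) ℝ)
    (hP1 : P1.PosDef) (hP2 : P2.PosDef)
    (Q : Matrix (Fin n) (Fin n) ℝ) (hQ : Q.PosDef)
    (hLyap : (-(F11ᵀ * P1 + P1 * F11 + Q)).PosSemidef) :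
    ∃ lam ρ lam1 : ℝ, 0 < lam ∧ 0 < ρ ∧ 0 < lam1 ∧
      ∀ (x : Fin n → ℝ) (e : Fin q → ℝ) (τ : ℝ), τ ∈ Set.Icc 0 (2 * ρ) →
        x ⬝ᵥ (F11ᵀ * P1 + P1 * F11).mulVec x
          + 2 * (x ⬝ᵥ (P1 * F12).mulVec e)
          + 2 * Real.exp ((2 * ρ - τ) * lam) * (e ⬝ᵥ P2.mulVec (F21.mulVec x + F22.mulVec e))
          - lam * Real.exp ((2 * ρ - τ) * lam) * (e ⬝ᵥ P2.mulVec e)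
        ≤ -((⨅ i, hQ.1.eigenvalues i) / 2) * (x ⬝ᵥ x)
          - lam1 * Real.exp ((2 * ρ - τ) * lam) * (e ⬝ᵥ e) :=
  stmt_4_general n q hn F11 F12 F21 F22 P1 P2 hP2 Q hQ hLyap
end

section
/- Let n, q ≥ 1, let F11 ∈ ℝ^{n×n}, F12 ∈ ℝ^{n×q}, F21 ∈ ℝ^{q×n}, F22 ∈ ℝ^{q×q}, let P1 ∈ ℝ^{n×n}, P2 ∈ ℝ^{q×q} be symmetric positive definite, and let γx > 0, γe > 0, λ > 0. Then there exist Δ and ρ with 0 < Δ < ρ such that for all τ ∈ [Δ, 2ρ] and all x ∈ ℝⁿ, e ∈ ℝ^q satisfying both xᵀP1(F11x + F12e) + eᵀP2(F21x + F22e) ≤ −γx|x|² and |e| ≤ γe|x|, one has: 2xᵀP1(F11x + F12e) + 2·exp((2ρ − τ)λ)·eᵀP2(F21x + F22e) ≤ −γx|x|². -/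
/-!
Write `A` and `B` for the two directional-derivative terms and `μ = exp((2ρ - τ)λ) ≥ 1`.
Then `2A + 2μB = 2(A + B) + 2(μ - 1)B ≤ -2γx|x|² + 2(μ - 1)B`. On the flow set
`|e| ≤ γe|x|`, so the cross term `B` is at most `K|x|²` for a constant `K` depending only
on the matrices and `γe`; taking `ρ` so small that `μ - 1 ≤ exp(2ρλ) - 1` is below
`γx / (2(K + 1))` absorbs it.
-/

open Matrix

lemma abs_le_sqrt_dotProduct_self {ι : Type*} [Fintype ι] (u : ι → ℝ) (i : ι) :
    |u i| ≤ √(u ⬝ᵥ u) :=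
  Real.abs_le_sqrt <| by
    simpa [dotProduct, sq] using
      Finset.single_le_sum (fun k _ => mul_self_nonneg (u k)) (Finset.mem_univ i)

lemma dotProduct_mulVec_le {m k : Type*} [Fintype m] [Fintype k]
    (M : Matrix m k ℝ) (u : m → ℝ) (v : k → ℝ) :
    u ⬝ᵥ M *ᵥ v ≤ (∑ i, ∑ j, |M i j|) * (√(u ⬝ᵥ u) * √(v ⬝ᵥ v)) := by
  have hsum : u ⬝ᵥ M *ᵥ v = ∑ i, ∑ j, u i * M i j * v j := by
    simp only [dotProduct, mulVec, Finset.mul_sum, mul_assoc]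
  rw [hsum, Finset.sum_mul]
  refine Finset.sum_le_sum fun i _ => ?_
  rw [Finset.sum_mul]
  refine Finset.sum_le_sum fun j _ => ?_
  calc u i * M i j * v j ≤ |M i j| * (|u i| * |v j|) := by
        rw [mul_comm |M i j|, ← abs_mul, ← abs_mul, mul_right_comm]
        exact le_abs_self _
    _ ≤ |M i j| * (√(u ⬝ᵥ u) * √(v ⬝ᵥ v)) := by
        gcongr
        exacts [abs_le_sqrt_dotProduct_self u i, abs_le_sqrt_dotProduct_self v j]

lemma exists_dotProduct_mulVec_add_le {m k : Type*} [Fintype m] [Fintype k]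
    (P : Matrix k k ℝ) (G : Matrix k m ℝ) (H : Matrix k k ℝ) {γ : ℝ} (hγ : 0 ≤ γ) :
    ∃ K, 0 ≤ K ∧ ∀ (x : m → ℝ) (e : k → ℝ), √(e ⬝ᵥ e) ≤ γ * √(x ⬝ᵥ x) →
      e ⬝ᵥ P *ᵥ (G *ᵥ x + H *ᵥ e) ≤ K * (x ⬝ᵥ x) := by
  set C₁ := ∑ i, ∑ j, |(P * G) i j|
  set C₂ := ∑ i, ∑ j, |(P * H) i j|
  have hC₁ : 0 ≤ C₁ := by positivity
  have hC₂ : 0 ≤ C₂ := by positivity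
  refine ⟨C₁ * γ + C₂ * γ ^ 2, by positivity, fun x e he => ?_⟩
  have hx : √(x ⬝ᵥ x) ^ 2 = x ⬝ᵥ x := Real.sq_sqrt (dotProduct_self_star_nonneg x)
  calc e ⬝ᵥ P *ᵥ (G *ᵥ x + H *ᵥ e)
        = e ⬝ᵥ (P * G) *ᵥ x + e ⬝ᵥ (P * H) *ᵥ e := by
        rw [mulVec_add, dotProduct_add, mulVec_mulVec, mulVec_mulVec]
    _ ≤ C₁ * (√(e ⬝ᵥ e) * √(x ⬝ᵥ x)) + C₂ * (√(e ⬝ᵥ e) * √(e ⬝ᵥ e)) :=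
        add_le_add (dotProduct_mulVec_le _ e x) (dotProduct_mulVec_le _ e e)
    _ ≤ C₁ * (γ * √(x ⬝ᵥ x) * √(x ⬝ᵥ x))
          + C₂ * (γ * √(x ⬝ᵥ x) * (γ * √(x ⬝ᵥ x))) := by
        gcongr
    _ = (C₁ * γ + C₂ * γ ^ 2) * (x ⬝ᵥ x) := by
        linear_combination (C₁ * γ + C₂ * γ ^ 2) * hx

lemma exists_pos_exp_two_mul_le {lam c : ℝ} (hlam : 0 < lam) (hc : 0 < c) :
    ∃ ρ, 0 < ρ ∧ Real.exp (2 * ρ * lam) ≤ 1 + c := by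
  refine ⟨Real.log (1 + c) / (2 * lam),
    div_pos (Real.log_pos (by linarith)) (by positivity), ?_⟩
  have hρ : 2 * (Real.log (1 + c) / (2 * lam)) * lam = Real.log (1 + c) := by field_simp
  rw [hρ, Real.exp_log (by positivity)]

theorem stmt_5_general (n q : ℕ)
    (F11 : Matrix (Fin n) (Fin n) ℝ) (F12 : Matrix (Fin n) (Fin q) ℝ)
    (F21 : Matrix (Fin q) (Fin n) ℝ) (F22 : Matrix (Fin q) (Fin q) ℝ)
    (P1 : Matrix (Fin n) (Fin n) ℝ) (P2 : Matrix (Fin q) (Fin q) ℝ)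
    (γx γe lam : ℝ) (hγx : 0 < γx) (hγe : 0 < γe) (hlam : 0 < lam) :
    ∃ Δ ρ : ℝ, 0 < Δ ∧ Δ < ρ ∧
      ∀ (τ : ℝ), τ ∈ Set.Icc Δ (2 * ρ) →
      ∀ (x : Fin n → ℝ) (e : Fin q → ℝ),
        x ⬝ᵥ P1.mulVec (F11.mulVec x + F12.mulVec e)
          + e ⬝ᵥ P2.mulVec (F21.mulVec x + F22.mulVec e) ≤ -γx * (x ⬝ᵥ x) →
        Real.sqrt (e ⬝ᵥ e) ≤ γe * Real.sqrt (x ⬝ᵥ x) →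
        2 * (x ⬝ᵥ P1.mulVec (F11.mulVec x + F12.mulVec e))
          + 2 * Real.exp ((2 * ρ - τ) * lam)
            * (e ⬝ᵥ P2.mulVec (F21.mulVec x + F22.mulVec e))
        ≤ -γx * (x ⬝ᵥ x) := by
  obtain ⟨K, hK, hB⟩ := exists_dotProduct_mulVec_add_le P2 F21 F22 hγe.le
  obtain ⟨ρ, hρ, hexp⟩ :=
    exists_pos_exp_two_mul_le hlam (by positivity : 0 < γx / (2 * (K + 1)))
  refine ⟨ρ / 2, ρ, by positivity, by linarith,
    fun τ ⟨_, hτρ⟩ x e hflow he => ?_⟩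
  set A := x ⬝ᵥ P1 *ᵥ (F11 *ᵥ x + F12 *ᵥ e)
  set B := e ⬝ᵥ P2 *ᵥ (F21 *ᵥ x + F22 *ᵥ e)
  set μ := Real.exp ((2 * ρ - τ) * lam)
  have hX : 0 ≤ x ⬝ᵥ x := dotProduct_self_star_nonneg x
  have hμ₁ : 1 ≤ μ := Real.one_le_exp (mul_nonneg (by linarith) hlam.le)
  have hμK : (μ - 1) * K ≤ γx / 2 :=
    calc (μ - 1) * K ≤ γx / (2 * (K + 1)) * (K + 1) := by
          gcongr
          · linarith [Real.exp_le_exp.2 (by nlinarith : (2 * ρ - τ) * lam ≤ 2 * ρ * lam)]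
          · linarith
      _ = γx / 2 := by field_simp
  calc 2 * A + 2 * μ * B = 2 * (A + B) + 2 * ((μ - 1) * B) := by ring
    _ ≤ 2 * (-γx * (x ⬝ᵥ x)) + 2 * ((μ - 1) * (K * (x ⬝ᵥ x))) := by
        have hμB := mul_le_mul_of_nonneg_left (hB x e he) (by linarith : 0 ≤ μ - 1)
        linarith
    _ ≤ -γx * (x ⬝ᵥ x) := by nlinarith

/-- Flow-decrease estimate (15) in the proof of Theorem 1: on the flow set of
the synchronous transmission policy (directional derivative of
`V(x,e) = (1/2)(xᵀP1x + eᵀP2e)` bounded by `-γx|x|²` and `|e| ≤ γe|x|`),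
for suitable `0 < Δ < ρ` and all `τ ∈ [Δ, 2ρ]`, the derivative of
`W(x,e,τ) = xᵀP1x + exp((2ρ-τ)λ) eᵀP2e` along the flow is at most `-γx|x|²`. -/
theorem stmt_5 (n q : ℕ) (hn : 1 ≤ n) (hq : 1 ≤ q)
    (F11 : Matrix (Fin n) (Fin n) ℝ) (F12 : Matrix (Fin n) (Fin q) ℝ)
    (F21 : Matrix (Fin q) (Fin n) ℝ) (F22 : Matrix (Fin q) (Fin q) ℝ)
    (P1 : Matrix (Fin n) (Fin n) ℝ) (P2 : Matrix (Fin q) (Fin q) ℝ)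
    (hP1 : P1.PosDef) (hP2 : P2.PosDef)
    (γx γe lam : ℝ) (hγx : 0 < γx) (hγe : 0 < γe) (hlam : 0 < lam) :
    ∃ Δ ρ : ℝ, 0 < Δ ∧ Δ < ρ ∧
      ∀ (τ : ℝ), τ ∈ Set.Icc Δ (2 * ρ) →
      ∀ (x : Fin n → ℝ) (e : Fin q → ℝ),
        x ⬝ᵥ P1.mulVec (F11.mulVec x + F12.mulVec e)
          + e ⬝ᵥ P2.mulVec (F21.mulVec x + F22.mulVec e) ≤ -γx * (x ⬝ᵥ x) →
        Real.sqrt (e ⬝ᵥ e) ≤ γe * Real.sqrt (x ⬝ᵥ x) →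
        2 * (x ⬝ᵥ P1.mulVec (F11.mulVec x + F12.mulVec e))
          + 2 * Real.exp ((2 * ρ - τ) * lam)
            * (e ⬝ᵥ P2.mulVec (F21.mulVec x + F22.mulVec e))
        ≤ -γx * (x ⬝ᵥ x) :=
  stmt_5_general n q F11 F12 F21 F22 P1 P2 γx γe lam hγx hγe hlam
end

section
/- Let n, q ≥ 1, A ∈ ℝ^{n×n}, B ∈ ℝ^{n×q}, C ∈ ℝ^{q×n}, and define F := [[A + BC, B], [−C(A + BC), −CB]] ∈ ℝ^{(n+q)×(n+q)}. If B has full column rank (rank B = q), then for every s ∈ ℂ, the complex (2n+q) × (n+q) matrix obtained by stacking F − s·I_{n+q} on top of [Iₙ 0] has rank n + q; that is, the pair ([Iₙ 0], F) is observable. -/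
/-!
A vector `(x, e)` in the kernel of the stacked PBH matrix has `x = 0` by the bottom block `[Iₙ 0]`;
the first block row of `F - sI` then reduces to `B e = 0`, so `e = 0` because `B` is injective,
also over `ℂ` (apply it to the real and imaginary parts of `e`). Hence the stacked matrix is
injective, i.e. has full column rank `n + q`, whatever `s`, `A` and `C` are.
-/

open Matrix

namespace Matrix

variable {m n : Type*} [Fintype n]

theorem rank_eq_card_iff_mulVec_injective {K : Type*} [Field K] (A : Matrix m n K) :
    A.rank = Fintype.card n ↔ Function.Injective A.mulVec := by
  constructor
  · intro hA
    have hker := A.mulVecLin.finrank_range_add_finrank_ker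
    rw [← rank, hA, Module.finrank_fintype_fun_eq_card, Nat.add_eq_left,
      Submodule.finrank_eq_zero, LinearMap.ker_eq_bot] at hker
    exact hker
  · intro hA
    rw [rank, LinearMap.finrank_range_of_inj hA, Module.finrank_fintype_fun_eq_card]

theorem mulVec_re (A : Matrix m n ℝ) (v : n → ℂ) :
    A *ᵥ (fun j => (v j).re) = fun i => ((A.map Complex.ofReal *ᵥ v) i).re := by
  ext i
  simp [mulVec, dotProduct, Complex.re_sum]

theorem mulVec_im (A : Matrix m n ℝ) (v : n → ℂ) :
    A *ᵥ (fun j => (v j).im) = fun i => ((A.map Complex.ofReal *ᵥ v) i).im := by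
  ext i
  simp [mulVec, dotProduct, Complex.im_sum]

theorem mulVec_injective_map_ofReal {A : Matrix m n ℝ} (hA : Function.Injective A.mulVec) :
    Function.Injective (A.map Complex.ofReal).mulVec := by
  refine (injective_iff_map_eq_zero (mulVecLin _)).2 fun v hv => ?_
  rw [mulVecLin_apply] at hv
  have hre : (fun j => (v j).re) = 0 := hA <| by rw [mulVec_re, hv, mulVec_zero]; rfl
  have him : (fun j => (v j).im) = 0 := hA <| by rw [mulVec_im, hv, mulVec_zero]; rfl
  exact funext fun j => Complex.ext (congrFun hre j) (congrFun him j)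

theorem mulVec_fromRows_fromBlocks_injective {p q R : Type*} [Fintype p] [Fintype q]
    [DecidableEq p] [CommRing R] (A₁₁ : Matrix p p R) {A₁₂ : Matrix p q R} (A₂₁ : Matrix q p R)
    (A₂₂ : Matrix q q R) (h₁₂ : Function.Injective A₁₂.mulVec) :
    Function.Injective
      (fromRows (fromBlocks A₁₁ A₁₂ A₂₁ A₂₂) (fromCols (1 : Matrix p p R) 0)).mulVec := by
  refine (injective_iff_map_eq_zero (mulVecLin _)).2 fun v hv => ?_
  rw [mulVecLin_apply, fromRows_mulVec, fromBlocks_mulVec, fromCols_mulVec] at hv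
  have hx : v ∘ Sum.inl = 0 := by
    simpa using congrArg (· ∘ Sum.inr) hv
  have he : v ∘ Sum.inr = 0 := h₁₂ <| funext fun i => by
    simpa [hx] using congrFun hv (Sum.inl (Sum.inl i))
  ext (i | j)
  · exact congrFun hx i
  · exact congrFun he j

end Matrix

theorem stmt_8_general (n q : ℕ)
    (A : Matrix (Fin n) (Fin n) ℝ) (B : Matrix (Fin n) (Fin q) ℝ)
    (C : Matrix (Fin q) (Fin n) ℝ)
    (hB : B.rank = q) :
    ∀ s : ℂ,
      (Matrix.fromRows
        ((Matrix.fromBlocks (A + B * C) B (-(C * (A + B * C))) (-(C * B))).map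
            Complex.ofReal
          - s • (1 : Matrix (Fin n ⊕ Fin q) (Fin n ⊕ Fin q) ℂ))
        (Matrix.fromCols (1 : Matrix (Fin n) (Fin n) ℂ)
          (0 : Matrix (Fin n) (Fin q) ℂ))).rank = n + q := by
  intro s
  have hB' : Function.Injective (B.map Complex.ofReal).mulVec :=
    mulVec_injective_map_ofReal <| (rank_eq_card_iff_mulVec_injective B).1 (by simpa using hB)
  rw [fromBlocks_map, ← fromBlocks_one, fromBlocks_smul, sub_eq_add_neg, fromBlocks_neg,
    fromBlocks_add, smul_zero, neg_zero, add_zero]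
  simpa using (rank_eq_card_iff_mulVec_injective _).2 <|
    mulVec_fromRows_fromBlocks_injective _ _ _ hB'

/-- Observability of the pair `([Iₙ 0], F)` for the error-dynamics flow matrix
`F = [[A+BC, B], [-C(A+BC), -CB]]` when `B` has full column rank: for every
`s ∈ ℂ`, stacking `F - sI` on top of `[Iₙ 0]` gives a matrix of rank `n + q`
(PBH test). -/
theorem stmt_8 (n q : ℕ) (hn : 1 ≤ n) (hq : 1 ≤ q)
    (A : Matrix (Fin n) (Fin n) ℝ) (B : Matrix (Fin n) (Fin q) ℝ)
    (C : Matrix (Fin q) (Fin n) ℝ)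
    (hB : B.rank = q) :
    ∀ s : ℂ,
      (Matrix.fromRows
        ((Matrix.fromBlocks (A + B * C) B (-(C * (A + B * C))) (-(C * B))).map
            Complex.ofReal
          - s • (1 : Matrix (Fin n ⊕ Fin q) (Fin n ⊕ Fin q) ℂ))
        (Matrix.fromCols (1 : Matrix (Fin n) (Fin n) ℂ)
          (0 : Matrix (Fin n) (Fin q) ℂ))).rank = n + q :=
  stmt_8_general n q A B C hB
end

section
/- Let n ≥ 1, let Q ∈ ℝ^{n×n} be symmetric, let γx > 0, a > 0, b > 0, c > 0, pᵢ > 0 and αᵢ ∈ (0, 1]. If x ∈ ℝⁿ and eᵢ ∈ ℝ satisfy −αᵢ·xᵀQx + (a + b·pᵢ)·|x|·|eᵢ| + c·pᵢ·eᵢ² ≤ −γx·|x|², then eᵢ² ≤ (λmax(Q)/(c·pᵢ))·|x|². -/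
/-!
Dropping the nonnegative terms `γx |x|²` and `(a + b pᵢ) |x| |eᵢ|` from the flow-set inequality
leaves `c pᵢ eᵢ² ≤ αᵢ xᵀQx`. Hence `xᵀQx ≥ 0`, so `αᵢ ≤ 1` gives `αᵢ xᵀQx ≤ xᵀQx`, and the
Rayleigh bound `xᵀQx ≤ λmax(Q) |x|²` finishes.
-/

open Matrix
open scoped MatrixOrder

namespace Matrix.IsHermitian

variable {ι : Type*} [Fintype ι] [DecidableEq ι] {A : Matrix ι ι ℝ}

theorem le_algebraMap_of_eigenvalues_le (hA : A.IsHermitian) {r : ℝ}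
    (h : ∀ i, hA.eigenvalues i ≤ r) : A ≤ algebraMap ℝ _ r :=
  le_algebraMap_of_spectrum_le
    (by rw [hA.spectrum_real_eq_range_eigenvalues]; rintro _ ⟨i, rfl⟩; exact h i) hA

theorem dotProduct_mulVec_le_of_eigenvalues_le (hA : A.IsHermitian) {r : ℝ}
    (h : ∀ i, hA.eigenvalues i ≤ r) (x : ι → ℝ) : x ⬝ᵥ A *ᵥ x ≤ r * (x ⬝ᵥ x) := by
  have hpsd := le_iff.mp (hA.le_algebraMap_of_eigenvalues_le h)
  simpa [sub_mulVec, dotProduct_sub, Algebra.algebraMap_eq_smul_one, smul_mulVec] using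
    hpsd.dotProduct_mulVec_nonneg x

theorem dotProduct_mulVec_le_iSup_eigenvalues_mul (hA : A.IsHermitian) (x : ι → ℝ) :
    x ⬝ᵥ A *ᵥ x ≤ (⨆ i, hA.eigenvalues i) * (x ⬝ᵥ x) :=
  hA.dotProduct_mulVec_le_of_eigenvalues_le (le_ciSup (Set.finite_range _).bddAbove) x

end Matrix.IsHermitian

theorem stmt_10_general (n : ℕ)
    (Q : Matrix (Fin n) (Fin n) ℝ) (hQ : Q.IsHermitian)
    (γx a b c pi αi : ℝ) (hγx : 0 < γx) (ha : 0 < a) (hb : 0 < b) (hc : 0 < c)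
    (hpi : 0 < pi) (hαi : αi ∈ Set.Ioc (0 : ℝ) 1)
    (x : Fin n → ℝ) (ei : ℝ)
    (hmem : -αi * (x ⬝ᵥ Q.mulVec x)
        + (a + b * pi) * Real.sqrt (x ⬝ᵥ x) * |ei| + c * pi * ei ^ 2
      ≤ -γx * (x ⬝ᵥ x)) :
    ei ^ 2 ≤ ((⨆ i, hQ.eigenvalues i) / (c * pi)) * (x ⬝ᵥ x) := by
  obtain ⟨hα0, hα1⟩ := hαi
  have hxx : 0 ≤ x ⬝ᵥ x := dotProduct_self_star_nonneg x
  have hcross : 0 ≤ (a + b * pi) * Real.sqrt (x ⬝ᵥ x) * |ei| := by positivity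
  have hflow : c * pi * ei ^ 2 ≤ αi * (x ⬝ᵥ Q *ᵥ x) := by
    linarith [mul_nonneg hγx.le hxx]
  have hquad : 0 ≤ x ⬝ᵥ Q *ᵥ x :=
    nonneg_of_mul_nonneg_right ((by positivity : 0 ≤ c * pi * ei ^ 2).trans hflow) hα0
  rw [div_mul_eq_mul_div, le_div_iff₀ (by positivity), mul_comm]
  calc c * pi * ei ^ 2 ≤ αi * (x ⬝ᵥ Q *ᵥ x) := hflow
    _ ≤ x ⬝ᵥ Q *ᵥ x := mul_le_of_le_one_left hquad hα1
    _ ≤ (⨆ i, hQ.eigenvalues i) * (x ⬝ᵥ x) := hQ.dotProduct_mulVec_le_iSup_eigenvalues_mul x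

/-- Error bound (27) in the proof of Theorem 2: membership of `(x, eᵢ)` in the
flow set `C̄ᵢ` of the asynchronous transmission policy, i.e.
`-αᵢ xᵀQx + (a + b pᵢ)|x||eᵢ| + c pᵢ eᵢ² ≤ -γx |x|²`, implies
`eᵢ² ≤ (λmax(Q)/(c pᵢ)) |x|²`. -/
theorem stmt_10 (n : ℕ) (hn : 1 ≤ n)
    (Q : Matrix (Fin n) (Fin n) ℝ) (hQ : Q.IsHermitian)
    (γx a b c pi αi : ℝ) (hγx : 0 < γx) (ha : 0 < a) (hb : 0 < b) (hc : 0 < c)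
    (hpi : 0 < pi) (hαi : αi ∈ Set.Ioc (0 : ℝ) 1)
    (x : Fin n → ℝ) (ei : ℝ)
    (hmem : -αi * (x ⬝ᵥ Q.mulVec x)
        + (a + b * pi) * Real.sqrt (x ⬝ᵥ x) * |ei| + c * pi * ei ^ 2
      ≤ -γx * (x ⬝ᵥ x)) :
    ei ^ 2 ≤ ((⨆ i, hQ.eigenvalues i) / (c * pi)) * (x ⬝ᵥ x) :=
  stmt_10_general n Q hQ γx a b c pi αi hγx ha hb hc hpi hαi x ei hmem
end

section
/- Let n ≥ 1, let Q ∈ ℝ^{n×n} be symmetric positive definite, let γx > 0, a > 0, b > 0, c > 0, pᵢ > 0, λ > 0 and αᵢ ∈ (0, 1]. Then there exist Δ and ρ with 0 < Δ < ρ such that for all τᵢ ∈ [Δ, 2ρ] and all x ∈ ℝⁿ, eᵢ ∈ ℝ satisfying −αᵢ·xᵀQx + (a + b·pᵢ)·|x|·|eᵢ| + c·pᵢ·eᵢ² ≤ −γx·|x|², one has: −αᵢ·xᵀQx + (a + exp((2ρ − τᵢ)λ)·pᵢ·b)·|x|·|eᵢ| + exp((2ρ − τᵢ)λ)·pᵢ·c·eᵢ²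 ≤ −(γx/2)·|x|². -/
open Matrix

/-! The hypothesis bounds the `eᵢ`-terms `pᵢ (b |x||eᵢ| + c eᵢ²)` by `αᵢ xᵀQx ≤ K |x|²`, with `K`
controlled by the entries of `Q`. Scaling these terms by the weight `μ = exp((2ρ - τᵢ)λ)` therefore
costs at most `(μ - 1) K |x|²`, and choosing `ρ` and `Δ` so close that `1 ≤ μ ≤ 1 + γx / (2K)`
keeps the cost below half of the decrease `γx |x|²`. -/

theorem sq_le_dotProduct_self {ι : Type*} [Fintype ι] (x : ι → ℝ) (i : ι) :
    x i ^ 2 ≤ x ⬝ᵥ x := by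
  simpa only [dotProduct, sq] using
    Finset.single_le_sum (f := fun j => x j * x j) (fun j _ => mul_self_nonneg _)
      (Finset.mem_univ i)

theorem dotProduct_mulVec_le_sum_abs_mul {ι : Type*} [Fintype ι] (Q : Matrix ι ι ℝ)
    (x : ι → ℝ) : x ⬝ᵥ Q *ᵥ x ≤ (∑ i, ∑ j, |Q i j|) * (x ⬝ᵥ x) := by
  have hexpand : x ⬝ᵥ Q *ᵥ x = ∑ i, ∑ j, x i * (Q i j * x j) := by
    simp only [dotProduct, mulVec, Finset.mul_sum]
  rw [hexpand, Finset.sum_mul]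
  refine Finset.sum_le_sum fun i _ => ?_
  rw [Finset.sum_mul]
  refine Finset.sum_le_sum fun j _ => ?_
  have hprod : |x i| * |x j| ≤ x ⬝ᵥ x := by
    nlinarith [two_mul_le_add_sq |x i| |x j|, sq_abs (x i), sq_abs (x j),
      sq_le_dotProduct_self x i, sq_le_dotProduct_self x j]
  calc x i * (Q i j * x j) ≤ |x i * (Q i j * x j)| := le_abs_self _
    _ = |Q i j| * (|x i| * |x j|) := by rw [abs_mul, abs_mul]; ring
    _ ≤ |Q i j| * (x ⬝ᵥ x) := mul_le_mul_of_nonneg_left hprod (abs_nonneg _)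

theorem exists_exp_weight_mem_Icc {ε lam : ℝ} (hε : 0 < ε) (hlam : 0 < lam) :
    ∃ Δ ρ : ℝ, 0 < Δ ∧ Δ < ρ ∧ ∀ τ ∈ Set.Icc Δ (2 * ρ),
      Real.exp ((2 * ρ - τ) * lam) ∈ Set.Icc 1 (1 + ε) := by
  set L := Real.log (1 + ε)
  have hL : 0 < L := Real.log_pos (by linarith)
  -- with `Δ = L / (2λ)` and `ρ = 3L / (4λ)` the exponent ranges over `[0, L]`
  refine ⟨L / (2 * lam), 3 * L / (4 * lam), by positivity, by
    rw [div_lt_div_iff₀ (by positivity) (by positivity)]; nlinarith, ?_⟩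
  rintro τ ⟨hτΔ, hτρ⟩
  have hexponent : (2 * (3 * L / (4 * lam)) - τ) * lam = 3 * L / 2 - τ * lam := by
    field_simp; ring
  have hτlam : L ≤ 2 * (τ * lam) := by
    rw [div_le_iff₀ (by positivity)] at hτΔ; linarith
  constructor
  · exact Real.one_le_exp (mul_nonneg (by linarith) hlam.le)
  · calc Real.exp ((2 * (3 * L / (4 * lam)) - τ) * lam) ≤ Real.exp L := by
          rw [Real.exp_le_exp, hexponent]; linarith
      _ = 1 + ε := Real.exp_log (by linarith)

theorem add_weight_mul_le_of_add_le {α q a r T μ γ K s : ℝ} (hα0 : 0 ≤ α) (hα1 : α ≤ 1)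
    (ha : 0 ≤ a) (hr : 0 ≤ r) (hγ : 0 ≤ γ) (hK : 0 ≤ K) (hs : 0 ≤ s) (hq : q ≤ K * s)
    (hμ1 : 1 ≤ μ) (hμK : (μ - 1) * K ≤ γ / 2) (h : -α * q + a * r + T ≤ -γ * s) :
    -α * q + a * r + μ * T ≤ -(γ / 2) * s := by
  have hαq : α * q ≤ K * s := by
    nlinarith [mul_le_mul_of_nonneg_left hq hα0, mul_nonneg hK hs]
  have hT : T ≤ K * s := by nlinarith [mul_nonneg ha hr, mul_nonneg hγ hs]
  have hcost : (μ - 1) * T ≤ γ / 2 * s :=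
    calc (μ - 1) * T ≤ (μ - 1) * (K * s) := mul_le_mul_of_nonneg_left hT (by linarith)
      _ = ((μ - 1) * K) * s := by ring
      _ ≤ γ / 2 * s := mul_le_mul_of_nonneg_right hμK hs
  linarith

theorem stmt_11_general (n : ℕ)
    (Q : Matrix (Fin n) (Fin n) ℝ)
    (γx a b c pi lam αi : ℝ) (hγx : 0 < γx) (ha : 0 < a)
    (hlam : 0 < lam) (hαi : αi ∈ Set.Ioc (0 : ℝ) 1) :
    ∃ Δ ρ : ℝ, 0 < Δ ∧ Δ < ρ ∧
      ∀ (τi : ℝ), τi ∈ Set.Icc Δ (2 * ρ) →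
      ∀ (x : Fin n → ℝ) (ei : ℝ),
        -αi * (x ⬝ᵥ Q.mulVec x)
            + (a + b * pi) * Real.sqrt (x ⬝ᵥ x) * |ei| + c * pi * ei ^ 2
          ≤ -γx * (x ⬝ᵥ x) →
        -αi * (x ⬝ᵥ Q.mulVec x)
            + (a + Real.exp ((2 * ρ - τi) * lam) * pi * b)
              * Real.sqrt (x ⬝ᵥ x) * |ei|
            + Real.exp ((2 * ρ - τi) * lam) * pi * c * ei ^ 2
          ≤ -(γx / 2) * (x ⬝ᵥ x) := by
  set K := ∑ i, ∑ j, |Q i j| + 1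
  have hK : 0 < K := by positivity
  obtain ⟨Δ, ρ, hΔ, hΔρ, hweight⟩ :=
    exists_exp_weight_mem_Icc (ε := γx / (2 * K)) (by positivity) hlam
  refine ⟨Δ, ρ, hΔ, hΔρ, fun τi hτi x ei h => ?_⟩
  obtain ⟨hμ1, hμε⟩ := hweight τi hτi
  set μ := Real.exp ((2 * ρ - τi) * lam)
  have hs : 0 ≤ x ⬝ᵥ x := by simpa using dotProduct_star_self_nonneg x
  have hq : x ⬝ᵥ Q *ᵥ x ≤ K * (x ⬝ᵥ x) := by
    nlinarith [dotProduct_mulVec_le_sum_abs_mul Q x]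
  have hμK : (μ - 1) * K ≤ γx / 2 := by
    calc (μ - 1) * K ≤ γx / (2 * K) * K := by gcongr; linarith
      _ = γx / 2 := by field_simp
  calc _ = -αi * (x ⬝ᵥ Q *ᵥ x) + a * (Real.sqrt (x ⬝ᵥ x) * |ei|)
        + μ * (pi * b * (Real.sqrt (x ⬝ᵥ x) * |ei|) + pi * c * ei ^ 2) := by ring
    _ ≤ _ := add_weight_mul_le_of_add_le hαi.1.le hαi.2 ha.le (by positivity) hγx.le hK.le hs
        hq hμ1 hμK (by linarith)

/-- Flow-decrease estimate (28) in the proof of Theorem 2: there exist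
`0 < Δ < ρ` such that for all `τᵢ ∈ [Δ, 2ρ]` and all `(x, eᵢ)` in the flow set
`C̄ᵢ` of the asynchronous transmission policy, the summand `πᵢ` with the
exponential weighting satisfies
`-αᵢ xᵀQx + (a + exp((2ρ-τᵢ)λ) pᵢ b)|x||eᵢ| + exp((2ρ-τᵢ)λ) pᵢ c eᵢ²
  ≤ -(γx/2)|x|²`. -/
theorem stmt_11 (n : ℕ) (hn : 1 ≤ n)
    (Q : Matrix (Fin n) (Fin n) ℝ) (hQ : Q.PosDef)
    (γx a b c pi lam αi : ℝ) (hγx : 0 < γx) (ha : 0 < a) (hb : 0 < b)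
    (hc : 0 < c) (hpi : 0 < pi) (hlam : 0 < lam) (hαi : αi ∈ Set.Ioc (0 : ℝ) 1) :
    ∃ Δ ρ : ℝ, 0 < Δ ∧ Δ < ρ ∧
      ∀ (τi : ℝ), τi ∈ Set.Icc Δ (2 * ρ) →
      ∀ (x : Fin n → ℝ) (ei : ℝ),
        -αi * (x ⬝ᵥ Q.mulVec x)
            + (a + b * pi) * Real.sqrt (x ⬝ᵥ x) * |ei| + c * pi * ei ^ 2
          ≤ -γx * (x ⬝ᵥ x) →
        -αi * (x ⬝ᵥ Q.mulVec x)
            + (a + Real.exp ((2 * ρ - τi) * lam) * pi * b)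
              * Real.sqrt (x ⬝ᵥ x) * |ei|
            + Real.exp ((2 * ρ - τi) * lam) * pi * c * ei ^ 2
          ≤ -(γx / 2) * (x ⬝ᵥ x) :=
  stmt_11_general n Q γx a b c pi lam αi hγx ha hlam hαi
end

section
/- Let n ≥ 1, let Q ∈ ℝ^{n×n} be symmetric positive definite with λ0 := λmin(Q), and let ε > 0, a > 0, b > 0, c > 0, pᵢ > 0. Then there exist λ > 0, ρ > 0 and λ1 > 0 such that for every αᵢ ≥ ε, every τᵢ ∈ [0, 2ρ], and all x ∈ ℝⁿ, eᵢ ∈ ℝ: −αᵢ·xᵀQx + (a + exp((2ρ − τᵢ)λ)·pᵢ·b)·|x|·|eᵢ| + pᵢ·exp((2ρ − τᵢ)λ)·(c − λ)·eᵢ² ≤ −(ε·λ0/2)·|x|² − λ1·exp((2ρ − τᵢ)λ)·eᵢ². -/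
/-!
Since `xᵀQx ≥ λ0 |x|²` and `αᵢ ≥ ε`, the first term is at most `-ελ0 |x|²`. Taking `ρ = 1/λ`
confines the weight `E = exp((2ρ - τᵢ)λ)` to `[1, e²]`, so the coefficient of the cross term is
at most `M = a + e² pᵢ b`. Young's inequality splits the cross term into `(ελ0/2)|x|²` plus
`M²/(2ελ0) eᵢ² ≤ E M²/(2ελ0) eᵢ²`, and `λ = c + (1 + M²/(2ελ0))/pᵢ` is chosen so that the last
term absorbs this with `-E eᵢ²` to spare, giving `λ1 = 1`.
-/

open Matrix
open scoped ComplexOrder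

theorem Matrix.IsHermitian.posSemidef_sub_smul_one {n 𝕜 : Type*} [Fintype n] [DecidableEq n]
    [RCLike 𝕜] {A : Matrix n n 𝕜} (hA : A.IsHermitian) {μ : ℝ} (h : ∀ i, μ ≤ hA.eigenvalues i) :
    (A - (μ : 𝕜) • 1).PosSemidef := by
  have hD : diagonal (RCLike.ofReal ∘ hA.eigenvalues) - algebraMap 𝕜 _ (μ : 𝕜)
      = diagonal (fun i ↦ ((hA.eigenvalues i - μ : ℝ) : 𝕜)) := by
    rw [algebraMap_eq_diagonal, diagonal_sub]
    congr 1
    ext i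
    simp
  rw [hA.spectral_theorem, ← Algebra.algebraMap_eq_smul_one, ← AlgEquiv.commutes
    (Unitary.conjStarAlgAut 𝕜 _ hA.eigenvectorUnitary).toAlgEquiv, StarAlgEquiv.coe_toAlgEquiv,
    ← map_sub, hD, Unitary.conjStarAlgAut_apply,
    Unitary.isUnit_coe.posSemidef_star_right_conjugate_iff, posSemidef_diagonal_iff]
  intro i
  simpa using h i

theorem Matrix.IsHermitian.mul_dotProduct_self_le_dotProduct_mulVec {n : Type*} [Fintype n]
    [DecidableEq n] {A : Matrix n n ℝ} (hA : A.IsHermitian) {μ : ℝ} (h : ∀ i, μ ≤ hA.eigenvalues i)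
    (x : n → ℝ) : μ * (x ⬝ᵥ x) ≤ x ⬝ᵥ A *ᵥ x := by
  have := (hA.posSemidef_sub_smul_one h).dotProduct_mulVec_nonneg x
  simp only [star_trivial, sub_mulVec, smul_mulVec, one_mulVec, dotProduct_sub, dotProduct_smul,
    RCLike.ofReal_real_eq_id, id, smul_eq_mul] at this
  linarith

theorem Matrix.PosDef.iInf_eigenvalues_pos_s12 {n 𝕜 : Type*} [Fintype n] [DecidableEq n] [Nonempty n]
    [RCLike 𝕜] {A : Matrix n n 𝕜} (hA : A.PosDef) : 0 < ⨅ i, hA.1.eigenvalues i := by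
  obtain ⟨i, hi⟩ := exists_eq_ciInf_of_finite (f := hA.1.eigenvalues)
  exact hi ▸ hA.eigenvalues_pos i

theorem mul_mul_le_weighted_sq_add_sq {L : ℝ} (hL : 0 < L) (t s u : ℝ) :
    t * s * u ≤ L / 2 * s ^ 2 + t ^ 2 / (2 * L) * u ^ 2 := by
  have key : 2 * L * (t * s * u) ≤ 2 * L * (L / 2 * s ^ 2 + t ^ 2 / (2 * L) * u ^ 2) := by
    field_simp
    nlinarith [sq_nonneg (L * s - t * u)]
  exact le_of_mul_le_mul_left key (by positivity)

theorem Real.exp_sub_mul_mem_Icc {ρ τ lam : ℝ} (hτ : τ ∈ Set.Icc 0 (2 * ρ)) (hlam : 0 ≤ lam) :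
    Real.exp ((2 * ρ - τ) * lam) ∈ Set.Icc 1 (Real.exp (2 * ρ * lam)) := by
  obtain ⟨hτ0, hτρ⟩ := hτ
  constructor
  · exact Real.one_le_exp (mul_nonneg (by linarith) hlam)
  · exact Real.exp_le_exp.2 (mul_le_mul_of_nonneg_right (by linarith) hlam)

theorem flow_estimate_of_bounds {ε a b c p l0 M lam α QF s u E : ℝ} (hε : 0 < ε) (ha : 0 ≤ a)
    (hb : 0 ≤ b) (hp : 0 ≤ p) (hl0 : 0 < l0) (hE : E ∈ Set.Icc 1 (Real.exp 2))
    (hM : a + Real.exp 2 * p * b ≤ M) (hlam : p * (c - lam) = -(1 + M ^ 2 / (2 * (ε * l0))))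
    (hα : ε ≤ α) (hQF : l0 * s ^ 2 ≤ QF) :
    -α * QF + (a + E * p * b) * s * u + p * E * (c - lam) * u ^ 2
      ≤ -(ε * l0 / 2) * s ^ 2 - E * u ^ 2 := by
  obtain ⟨hE1, hE2⟩ := hE
  set L := ε * l0
  have hL : 0 < L := mul_pos hε hl0
  have hαQF : L * s ^ 2 ≤ α * QF := by
    have hQF0 : 0 ≤ QF := le_trans (by positivity) hQF
    calc L * s ^ 2 = ε * (l0 * s ^ 2) := by ring
      _ ≤ α * QF := mul_le_mul hα hQF (by positivity) (by linarith)
  have ht : (a + E * p * b) ^ 2 ≤ E * M ^ 2 := by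
    have hpb : 0 ≤ p * b := mul_nonneg hp hb
    have h0 : 0 ≤ a + E * p * b := by nlinarith
    have hM' : a + E * p * b ≤ M := by nlinarith
    calc (a + E * p * b) ^ 2 ≤ M ^ 2 := pow_le_pow_left₀ h0 hM' 2
      _ ≤ E * M ^ 2 := le_mul_of_one_le_left (sq_nonneg M) hE1
  have hyoung := mul_mul_le_weighted_sq_add_sq hL (a + E * p * b) s u
  have hcoef_le : (a + E * p * b) ^ 2 / (2 * L) * u ^ 2 ≤ E * M ^ 2 / (2 * L) * u ^ 2 := by
    gcongr
  have hcoef : p * E * (c - lam) = -(E * (1 + M ^ 2 / (2 * L))) := by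
    rw [mul_right_comm, hlam]; ring
  calc -α * QF + (a + E * p * b) * s * u + p * E * (c - lam) * u ^ 2
      ≤ -(L * s ^ 2) + (L / 2 * s ^ 2 + E * M ^ 2 / (2 * L) * u ^ 2)
          - E * (1 + M ^ 2 / (2 * L)) * u ^ 2 := by
        rw [hcoef]; linarith
    _ = -(L / 2) * s ^ 2 - E * u ^ 2 := by ring

/-- Flow-decrease estimate (26) in the proof of Theorem 2 (dwell-time phase
of the `i`-th timer): with `λ0 = λmin(Q)`, there exist `λ, ρ, λ1 > 0` such
that for every `αᵢ ≥ ε`, every `τᵢ ∈ [0, 2ρ]` and all `x`, `eᵢ`,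
`-αᵢ xᵀQx + (a + exp((2ρ-τᵢ)λ) pᵢ b)|x||eᵢ| + pᵢ exp((2ρ-τᵢ)λ)(c - λ) eᵢ²
  ≤ -(ε λ0 / 2)|x|² - λ1 exp((2ρ-τᵢ)λ) eᵢ²`. -/
theorem stmt_12 (n : ℕ) (hn : 1 ≤ n)
    (Q : Matrix (Fin n) (Fin n) ℝ) (hQ : Q.PosDef)
    (ε a b c pi : ℝ) (hε : 0 < ε) (ha : 0 < a) (hb : 0 < b) (hc : 0 < c)
    (hpi : 0 < pi) :
    ∃ lam ρ lam1 : ℝ, 0 < lam ∧ 0 < ρ ∧ 0 < lam1 ∧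
      ∀ (αi : ℝ), ε ≤ αi →
      ∀ (τi : ℝ), τi ∈ Set.Icc 0 (2 * ρ) →
      ∀ (x : Fin n → ℝ) (ei : ℝ),
        -αi * (x ⬝ᵥ Q.mulVec x)
            + (a + Real.exp ((2 * ρ - τi) * lam) * pi * b)
              * Real.sqrt (x ⬝ᵥ x) * |ei|
            + pi * Real.exp ((2 * ρ - τi) * lam) * (c - lam) * ei ^ 2
          ≤ -(ε * (⨅ i, hQ.1.eigenvalues i) / 2) * (x ⬝ᵥ x)
            - lam1 * Real.exp ((2 * ρ - τi) * lam) * ei ^ 2 := by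
  have : Nonempty (Fin n) := ⟨⟨0, hn⟩⟩
  set l0 := ⨅ i, hQ.1.eigenvalues i
  have hl0 : 0 < l0 := hQ.iInf_eigenvalues_pos_s12
  set M := a + Real.exp 2 * pi * b
  set lam := c + (1 + M ^ 2 / (2 * (ε * l0))) / pi
  have hlam : 0 < lam := by positivity
  have hlam_c : pi * (c - lam) = -(1 + M ^ 2 / (2 * (ε * l0))) := by
    simp only [lam]
    field_simp
    ring
  refine ⟨lam, 1 / lam, 1, hlam, by positivity, one_pos, fun α hα τ hτ x ei ↦ ?_⟩
  have hE : Real.exp ((2 * (1 / lam) - τ) * lam) ∈ Set.Icc 1 (Real.exp 2) := by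
    simpa [hlam.ne'] using Real.exp_sub_mul_mem_Icc hτ hlam.le
  have hxx : 0 ≤ x ⬝ᵥ x := by simpa using dotProduct_star_self_nonneg x
  have hQx : l0 * Real.sqrt (x ⬝ᵥ x) ^ 2 ≤ x ⬝ᵥ Q *ᵥ x := by
    rw [Real.sq_sqrt hxx]
    exact hQ.1.mul_dotProduct_self_le_dotProduct_mulVec
      (fun i ↦ ciInf_le (Set.finite_range _).bddBelow i) x
  simpa only [Real.sq_sqrt hxx, sq_abs, one_mul] using
    flow_estimate_of_bounds hε ha.le hb.le hpi.le hl0 hE le_rfl hlam_c hα hQx (u := |ei|)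
end
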